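/- arXiv:2305.01282 — 4 statements merged into one kernel-verified Lean document; each statement's English description precedes it below -/
import Mathlib

section
/- For -1<q<1 and real θ, one has exp(-i v_q(θ)) = (1 - q e^{iθ})/(e^{iθ} - q), where v_q(θ) = ∫₀^θ (1-q²)/(1-2q cos t + q²) dt. -/
/-!
With `z = e^{iθ}`, one has `(1 - q z)(z - q) = z (1 - 2 q cos θ + q²)`, so the logarithmic
derivative of `F(θ) = (1 - q z)/(z - q)` is `-i (1 - q²)/(1 - 2 q cos θ + q²) = -i v_q'(θ)`.
Hence `F` and `exp(-i v_q)` solve the same linear ODE with the same value `1` at `θ = 0`.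
-/

noncomputable def uq (q θ : ℝ) : ℝ := (1 - q ^ 2) / (1 - 2 * q * Real.cos θ + q ^ 2)

noncomputable def vq (q θ : ℝ) : ℝ := ∫ t in (0 : ℝ)..θ, uq q t

open Complex

theorem eq_exp_sub_mul_of_hasDerivAt {F a a' : ℝ → ℂ}
    (hF : ∀ t, HasDerivAt F (a' t * F t) t) (ha : ∀ t, HasDerivAt a (a' t) t) (t s : ℝ) :
    F t = exp (a t - a s) * F s := by
  have hG : ∀ t, HasDerivAt (fun t => exp (-a t) * F t) 0 t := fun t =>
    ((ha t).neg.cexp.mul (hF t)).congr_deriv (by ring)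
  have hconst := is_const_of_deriv_eq_zero (fun t => (hG t).differentiableAt)
    (fun t => (hG t).deriv) t s
  rw [sub_eq_add_neg, exp_add, mul_assoc, ← hconst, ← mul_assoc, ← exp_add, add_neg_cancel,
    exp_zero, one_mul]

theorem one_sub_mul_exp_mul_exp_sub (q t : ℂ) :
    (1 - q * exp (I * t)) * (exp (I * t) - q) = exp (I * t) * (1 - 2 * q * cos t + q ^ 2) := by
  have h : 2 * cos t * exp (I * t) = exp (I * t) ^ 2 + 1 := by
    rw [two_cos, add_mul, ← exp_add, ← exp_add, sq, ← exp_add, neg_mul, mul_comm t I,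
      neg_add_cancel, exp_zero]
  linear_combination q * h

theorem exp_I_mul_ofReal_sub_ne_zero {q : ℂ} (hq : ‖q‖ < 1) (t : ℝ) :
    exp (I * t) - q ≠ 0 := by
  intro h
  have := norm_exp_I_mul_ofReal t
  rw [sub_eq_zero.mp h] at this
  linarith

theorem one_sub_two_mul_cos_add_sq_pos {q : ℝ} (hq : |q| < 1) (t : ℝ) :
    0 < 1 - 2 * q * Real.cos t + q ^ 2 := by
  rcases le_or_gt q 0 with h | h
  · nlinarith [Real.neg_one_le_cos t, sq_nonneg (1 + q), abs_lt.mp hq]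
  · nlinarith [Real.cos_le_one t, sq_nonneg (1 - q), abs_lt.mp hq]

theorem hasDerivAt_vq {q : ℝ} (hq : |q| < 1) (θ : ℝ) : HasDerivAt (vq q) (uq q θ) θ := by
  have hcont : Continuous (uq q) := by
    refine Continuous.div (by fun_prop) (by fun_prop) fun t => ?_
    exact (one_sub_two_mul_cos_add_sq_pos hq t).ne'
  exact (hcont.integral_hasStrictDerivAt 0 θ).hasDerivAt

theorem hasDerivAt_one_sub_mul_exp_div_exp_sub {q : ℝ} (hq : |q| < 1) (θ : ℝ) :
    HasDerivAt (fun t : ℝ => (1 - q * exp (I * t)) / (exp (I * t) - q))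
      (-(I * uq q θ) * ((1 - q * exp (I * θ)) / (exp (I * θ) - q))) θ := by
  have hq' : ‖(q : ℂ)‖ < 1 := by rwa [norm_real, Real.norm_eq_abs]
  have hfactor := one_sub_mul_exp_mul_exp_sub q θ
  have hzq := exp_I_mul_ofReal_sub_ne_zero hq' θ
  have hz : HasDerivAt (fun t : ℝ => exp (I * t)) (I * exp (I * θ)) θ := by
    simpa [mul_comm] using ((hasDerivAt_id (θ : ℂ)).const_mul I).cexp.comp_ofReal
  have hD : (1 : ℂ) - 2 * q * cos θ + q ^ 2 ≠ 0 := by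
    exact_mod_cast (one_sub_two_mul_cos_add_sq_pos hq θ).ne'
  have hu : (uq q θ : ℂ) * (1 - 2 * q * cos θ + q ^ 2) = 1 - q ^ 2 := by
    rw [uq]; push_cast; exact div_mul_cancel₀ _ hD
  refine ((hz.const_mul (q : ℂ)).const_sub 1 |>.div (hz.sub_const _) hzq).congr_deriv ?_
  field_simp
  linear_combination uq q θ * hfactor + exp (I * θ) * hu

theorem exp_neg_I_vq (q : ℝ) (hq : -1 < q) (hq' : q < 1) (θ : ℝ) :
    Complex.exp (-(Complex.I * (vq q θ : ℝ))) =
      (1 - (q : ℂ) * Complex.exp (Complex.I * (θ : ℝ))) /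
        (Complex.exp (Complex.I * (θ : ℝ)) - (q : ℂ)) := by
  have habs : |q| < 1 := abs_lt.mpr ⟨hq, hq'⟩
  have hv : ∀ t, HasDerivAt (fun t => -(I * (vq q t : ℝ))) (-(I * uq q t)) t := fun t =>
    ((hasDerivAt_vq habs t).ofReal_comp.const_mul I).neg
  have hsol := eq_exp_sub_mul_of_hasDerivAt (hasDerivAt_one_sub_mul_exp_div_exp_sub habs) hv θ 0
  have hv0 : vq q 0 = 0 := intervalIntegral.integral_same
  have hq1 : (1 : ℂ) - q ≠ 0 := by exact_mod_cast (sub_pos.mpr hq').ne'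
  simp only [hv0, ofReal_zero, mul_zero, exp_zero, mul_one, neg_zero, sub_zero,
    div_self hq1] at hsol
  exact hsol.symm
end

section
/- Let m be a positive integer, q, q₀, q₁ ∈ (-1,1). The Hessian of the hyperoctahedral Morse function, given by H_{jj}(ξ) = 2(m+1) + u_{q₀}(ξ_j) + u_{q₁}(ξ_j) + Σ_{l≠j}(u_q(ξ_j+ξ_l) + u_q(ξ_j-ξ_l)) and H_{jk}(ξ) = u_q(ξ_j+ξ_k) - u_q(ξ_j-ξ_k) for j≠k, satisfies Σ_{j,k} H_{jk}(ξ) x_j x_k ≥ 2(m+1) Σ_j x_j² for all x, ξ ∈ ℝⁿ. -/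
/-!
For symmetric weights `a`, `b`, pairing the `(j, k)` and `(k, j)` terms shows that twice the
off-diagonal part of the form is `∑_{j ≠ k} (a j k (x_j + x_k)² + b j k (x_j - x_k)²)`. With
`a j k = u_q(ξ_j + ξ_k)` and `b j k = u_q(ξ_j - ξ_k)`, both positive for `|q| < 1`, the form is
therefore at least `∑_j (2(m+1) + u_{q₀}(ξ_j) + u_{q₁}(ξ_j)) x_j² ≥ 2(m+1) ∑_j x_j²`.
-/

open Finset

lemma uq_pos {q : ℝ} (hq : -1 < q) (hq' : q < 1) (θ : ℝ) : 0 < uq q θ := by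
  have hcos : q * Real.cos θ < 1 := by
    calc q * Real.cos θ ≤ |q * Real.cos θ| := le_abs_self _
      _ = |q| * |Real.cos θ| := abs_mul _ _
      _ ≤ |q| := mul_le_of_le_one_right (abs_nonneg q) (Real.abs_cos_le_one θ)
      _ < 1 := abs_lt.2 ⟨hq, hq'⟩
  have hden : 1 - 2 * q * Real.cos θ + q ^ 2
      = (1 - q * Real.cos θ) ^ 2 + q ^ 2 * Real.sin θ ^ 2 := by
    linear_combination (-q ^ 2) * Real.sin_sq_add_cos_sq θ
  rw [uq, hden]
  apply div_pos <;> nlinarith [sq_nonneg (q * Real.sin θ)]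

lemma uq_sub_comm (q a b : ℝ) : uq q (a - b) = uq q (b - a) := by
  rw [← neg_sub, uq, uq, Real.cos_neg]

section OffDiagonal

variable {ι : Type*} [Fintype ι] [DecidableEq ι]

lemma sum_sum_erase_comm {M : Type*} [AddCommGroup M] (F : ι → ι → M) :
    ∑ j, ∑ k ∈ univ.erase j, F j k = ∑ j, ∑ k ∈ univ.erase j, F k j := by
  simp only [sum_erase_eq_sub (mem_univ _), sum_sub_distrib]
  rw [sum_comm]

lemma two_mul_sum_offDiag_eq_sum_sq {a b : ι → ι → ℝ} (ha : ∀ j k, a j k = a k j)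
    (hb : ∀ j k, b j k = b k j) (x : ι → ℝ) :
    2 * ∑ j, ∑ k ∈ univ.erase j, ((a j k + b j k) * x j ^ 2 + (a j k - b j k) * (x j * x k))
      = ∑ j, ∑ k ∈ univ.erase j, (a j k * (x j + x k) ^ 2 + b j k * (x j - x k) ^ 2) := by
  have hswap : ∑ j, ∑ k ∈ univ.erase j, (a j k + b j k) * x k ^ 2
      = ∑ j, ∑ k ∈ univ.erase j, (a j k + b j k) * x j ^ 2 := by
    rw [sum_sum_erase_comm]
    simp only [ha, hb]
  calc 2 * ∑ j, ∑ k ∈ univ.erase j, ((a j k + b j k) * x j ^ 2 + (a j k - b j k) * (x j * x k))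
      = ∑ j, ∑ k ∈ univ.erase j, ((a j k + b j k) * x j ^ 2 + (a j k - b j k) * (x j * x k))
        + ∑ j, ∑ k ∈ univ.erase j, ((a j k + b j k) * x k ^ 2 + (a j k - b j k) * (x j * x k)) := by
        simp only [sum_add_distrib, hswap]; ring
    _ = _ := by
        rw [← sum_add_distrib]
        refine sum_congr rfl fun j _ => ?_
        rw [← sum_add_distrib]
        exact sum_congr rfl fun k _ => by ring

lemma sum_offDiag_nonneg {a b : ι → ι → ℝ} (ha : ∀ j k, a j k = a k j)
    (hb : ∀ j k, b j k = b k j) (ha₀ : ∀ j k, 0 ≤ a j k) (hb₀ : ∀ j k, 0 ≤ b j k)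
    (x : ι → ℝ) :
    0 ≤ ∑ j, ∑ k ∈ univ.erase j, ((a j k + b j k) * x j ^ 2 + (a j k - b j k) * (x j * x k)) := by
  have hsq : 0 ≤ ∑ j, ∑ k ∈ univ.erase j, (a j k * (x j + x k) ^ 2 + b j k * (x j - x k) ^ 2) :=
    sum_nonneg fun j _ => sum_nonneg fun k _ => by
      have := ha₀ j k; have := hb₀ j k; positivity
  linarith [two_mul_sum_offDiag_eq_sum_sq ha hb x]

lemma sum_sum_mul_mul_eq_of_diag_offDiag {H : Matrix ι ι ℝ} {D : ι → ℝ} {a b : ι → ι → ℝ}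
    (hdiag : ∀ j, H j j = D j + ∑ k ∈ univ.erase j, (a j k + b j k))
    (hoff : ∀ j k, j ≠ k → H j k = a j k - b j k) (x : ι → ℝ) :
    ∑ j, ∑ k, H j k * x j * x k = ∑ j, D j * x j ^ 2
      + ∑ j, ∑ k ∈ univ.erase j, ((a j k + b j k) * x j ^ 2 + (a j k - b j k) * (x j * x k)) := by
  rw [← sum_add_distrib]
  refine sum_congr rfl fun j _ => ?_
  have hrow : ∑ k ∈ univ.erase j, H j k * x j * x k
      = ∑ k ∈ univ.erase j, (a j k - b j k) * (x j * x k) :=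
    sum_congr rfl fun k hk => by rw [hoff j k (ne_of_mem_erase hk).symm]; ring
  rw [← add_sum_erase _ _ (mem_univ j), hrow, hdiag]
  simp only [sum_add_distrib, add_mul]
  rw [← sum_mul, ← sum_mul]
  ring

theorem le_sum_sum_mul_mul_of_diag_offDiag {H : Matrix ι ι ℝ} {D : ι → ℝ} {a b : ι → ι → ℝ}
    (ha : ∀ j k, a j k = a k j) (hb : ∀ j k, b j k = b k j)
    (ha₀ : ∀ j k, 0 ≤ a j k) (hb₀ : ∀ j k, 0 ≤ b j k)
    (hdiag : ∀ j, H j j = D j + ∑ k ∈ univ.erase j, (a j k + b j k))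
    (hoff : ∀ j k, j ≠ k → H j k = a j k - b j k) (x : ι → ℝ) :
    ∑ j, D j * x j ^ 2 ≤ ∑ j, ∑ k, H j k * x j * x k := by
  rw [sum_sum_mul_mul_eq_of_diag_offDiag hdiag hoff]
  linarith [sum_offDiag_nonneg ha hb ha₀ hb₀ x]

end OffDiagonal

theorem hessian_bound_typeB_general (n m : ℕ)
    (q q0 q1 : ℝ) (hq : -1 < q) (hq' : q < 1) (hq0 : -1 < q0) (hq0' : q0 < 1)
    (hq1 : -1 < q1) (hq1' : q1 < 1)
    (ξ : Fin n → ℝ) (H : Matrix (Fin n) (Fin n) ℝ)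
    (hH : ∀ j k : Fin n, H j k =
      if j = k then
        2 * ((m : ℝ) + 1) + uq q0 (ξ j) + uq q1 (ξ j) +
          ∑ l ∈ Finset.univ.erase j, (uq q (ξ j + ξ l) + uq q (ξ j - ξ l))
      else uq q (ξ j + ξ k) - uq q (ξ j - ξ k)) :
    ∀ x : Fin n → ℝ, 2 * ((m : ℝ) + 1) * ∑ j, x j ^ 2 ≤ ∑ j, ∑ k, H j k * x j * x k := by
  intro x
  have hform := le_sum_sum_mul_mul_of_diag_offDiag (H := H)
    (D := fun j => 2 * ((m : ℝ) + 1) + uq q0 (ξ j) + uq q1 (ξ j))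
    (a := fun j k => uq q (ξ j + ξ k)) (b := fun j k => uq q (ξ j - ξ k))
    (fun j k => by rw [add_comm]) (fun j k => uq_sub_comm q _ _)
    (fun j k => (uq_pos hq hq' _).le) (fun j k => (uq_pos hq hq' _).le)
    (fun j => by rw [hH, if_pos rfl]) (fun j k hjk => by rw [hH, if_neg hjk]) x
  refine le_trans ?_ hform
  rw [mul_sum]
  refine sum_le_sum fun j _ => mul_le_mul_of_nonneg_right ?_ (sq_nonneg (x j))
  linarith [uq_pos hq0 hq0' (ξ j), uq_pos hq1 hq1' (ξ j)]

theorem hessian_bound_typeB (n m : ℕ) (hm : 0 < m)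
    (q q0 q1 : ℝ) (hq : -1 < q) (hq' : q < 1) (hq0 : -1 < q0) (hq0' : q0 < 1)
    (hq1 : -1 < q1) (hq1' : q1 < 1)
    (ξ : Fin n → ℝ) (H : Matrix (Fin n) (Fin n) ℝ)
    (hH : ∀ j k : Fin n, H j k =
      if j = k then
        2 * ((m : ℝ) + 1) + uq q0 (ξ j) + uq q1 (ξ j) +
          ∑ l ∈ Finset.univ.erase j, (uq q (ξ j + ξ l) + uq q (ξ j - ξ l))
      else uq q (ξ j + ξ k) - uq q (ξ j - ξ k)) :
    ∀ x : Fin n → ℝ, 2 * ((m : ℝ) + 1) * ∑ j, x j ^ 2 ≤ ∑ j, ∑ k, H j k * x j * x k :=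
  hessian_bound_typeB_general n m q q0 q1 hq hq' hq0 hq0' hq1 hq1' ξ H hH
end

section
/- If a vector ξ ∈ ℝⁿ satisfies the hyperoctahedral critical equations 2(m+1)ξ_j + v_{q₀}(ξ_j) + v_{q₁}(ξ_j) + Σ_{k≠j}(v_q(ξ_j+ξ_k) + v_q(ξ_j-ξ_k)) = 2π(λ_j + n + 1 - j) for j = 1,…,n, where m ≥ λ₁ ≥ ⋯ ≥ λ_n ≥ 0 are integers and q, q₀, q₁ ∈ (-1,1), then π > ξ₁ > ξ₂ > ⋯ > ξ_n > 0. -/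
/-!
Integrating the Poisson kernel gives `v_p(θ) = θ + 2 arctan (p sin θ / (1 - p cos θ))`, so `v_p` is
odd, strictly increasing and `v_p(θ + 2π) = v_p(θ) + 2π`. Consequently `v_p a + v_p b ≤ 0` when
`a + b ≤ 0` and `v_p a + v_p b ≥ 2π` when `a + b ≥ 2π`. Compare the left-hand side `L_j` of the
`j`-th critical equation with its right-hand side `2π(λ_j + n - j)`: if `ξ_j ≤ 0`, then `L_j ≤ 0`
while the right side is `≥ 2π`; if `ξ_j ≥ π`, then `L_j ≥ 2π(m + 1 + n) > 2π(m + n)`; and if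
`j < k` but `ξ_j ≤ ξ_k`, then `L_j ≤ L_k` while the right sides drop by at least `2π`.
-/

open Real Finset

section Kernel

variable {p : ℝ}

lemma one_sub_mul_cos_pos (hp : |p| < 1) (θ : ℝ) : 0 < 1 - p * cos θ := by
  have h : |p * cos θ| ≤ |p| := by
    rw [abs_mul]; exact mul_le_of_le_one_right (abs_nonneg p) (abs_cos_le_one θ)
  linarith [le_abs_self (p * cos θ)]

lemma uq_denom_pos (hp : |p| < 1) (θ : ℝ) : 0 < 1 - 2 * p * cos θ + p ^ 2 := by
  have h : 1 - 2 * p * cos θ + p ^ 2 = (1 - p * cos θ) ^ 2 + (p * sin θ) ^ 2 := by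
    linear_combination (-p ^ 2) * sin_sq_add_cos_sq θ
  rw [h]
  exact add_pos_of_pos_of_nonneg (pow_pos (one_sub_mul_cos_pos hp θ) 2) (sq_nonneg _)

lemma uq_pos_s10 (hp : |p| < 1) (θ : ℝ) : 0 < uq p θ := by
  have : p ^ 2 < 1 := by rw [← sq_abs]; nlinarith [abs_nonneg p]
  exact div_pos (by linarith) (uq_denom_pos hp θ)

lemma continuous_uq (hp : |p| < 1) : Continuous (uq p) :=
  continuous_const.div (by fun_prop) fun θ => (uq_denom_pos hp θ).ne'

/-- The continuous argument of the Blaschke factor `(e^{iθ} - p) / (1 - p e^{iθ})`. -/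
noncomputable def vqClosedForm (p θ : ℝ) : ℝ :=
  θ + 2 * arctan (p * sin θ / (1 - p * cos θ))

lemma hasDerivAt_vqClosedForm (hp : |p| < 1) (θ : ℝ) :
    HasDerivAt (vqClosedForm p) (uq p θ) θ := by
  have hc := one_sub_mul_cos_pos hp θ
  have hd := uq_denom_pos hp θ
  refine ((hasDerivAt_id' θ).add
    ((((hasDerivAt_sin θ).const_mul p).div
      (((hasDerivAt_cos θ).const_mul p).const_sub 1) hc.ne').arctan.const_mul 2)).congr_deriv ?_
  simp only [Pi.div_apply, uq]
  field_simp
  linear_combination (-p ^ 2 * (2 - 2 * p * cos θ)) * sin_sq_add_cos_sq θ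

lemma vq_eq_vqClosedForm (hp : |p| < 1) : vq p = vqClosedForm p := by
  funext θ
  rw [vq, intervalIntegral.integral_eq_sub_of_hasDerivAt
    (fun t _ => hasDerivAt_vqClosedForm hp t) ((continuous_uq hp).intervalIntegrable 0 θ)]
  simp [vqClosedForm]

lemma vq_strictMono (hp : |p| < 1) : StrictMono (vq p) := by
  rw [vq_eq_vqClosedForm hp]
  exact strictMono_of_deriv_pos fun θ => (hasDerivAt_vqClosedForm hp θ).deriv ▸ uq_pos_s10 hp θ

lemma vq_neg (hp : |p| < 1) (θ : ℝ) : vq p (-θ) = -vq p θ := by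
  simp only [vq_eq_vqClosedForm hp, vqClosedForm, sin_neg, cos_neg, mul_neg, neg_div, arctan_neg]
  ring

lemma vq_add_two_pi (hp : |p| < 1) (θ : ℝ) : vq p (θ + 2 * π) = vq p θ + 2 * π := by
  simp only [vq_eq_vqClosedForm hp, vqClosedForm, sin_add_two_pi, cos_add_two_pi]
  ring

lemma vq_zero : vq p 0 = 0 := by simp [vq]

lemma vq_pi (hp : |p| < 1) : vq p π = π := by
  have h := vq_add_two_pi hp (-π)
  rw [vq_neg hp, show -π + 2 * π = π by ring] at h
  linarith

lemma vq_add_vq_nonpos (hp : |p| < 1) {a b : ℝ} (hab : a + b ≤ 0) : vq p a + vq p b ≤ 0 := by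
  have := (vq_strictMono hp).monotone (show b ≤ -a by linarith)
  rw [vq_neg hp] at this
  linarith

lemma two_pi_le_vq_add_vq (hp : |p| < 1) {a b : ℝ} (hab : 2 * π ≤ a + b) :
    2 * π ≤ vq p a + vq p b := by
  have := (vq_strictMono hp).monotone (show -a + 2 * π ≤ b by linarith)
  rw [vq_add_two_pi hp, vq_neg hp] at this
  linarith

end Kernel

lemma Finset.sum_erase_le_sum_erase {ι M : Type*} [DecidableEq ι] [AddCommMonoid M]
    [PartialOrder M] [IsOrderedAddMonoid M] {s : Finset ι} {f g : ι → M} {j k : ι}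
    (hj : j ∈ s) (hk : k ∈ s) (hjk : j ≠ k) (hkj : f k ≤ g j)
    (hfg : ∀ l ∈ s, l ≠ j → l ≠ k → f l ≤ g l) :
    ∑ l ∈ s.erase j, f l ≤ ∑ l ∈ s.erase k, g l := by
  rw [← add_sum_erase _ _ (mem_erase.2 ⟨hjk.symm, hk⟩),
    ← add_sum_erase _ _ (mem_erase.2 ⟨hjk, hj⟩), erase_right_comm]
  refine add_le_add hkj (sum_le_sum fun l hl => ?_)
  simp only [mem_erase] at hl
  exact hfg l hl.2.2 hl.1 hl.2.1

section CriticalEquation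

variable {ι : Type*} [Fintype ι] [DecidableEq ι] {c q q0 q1 : ℝ} {ξ : ι → ℝ}

variable (c q q0 q1 ξ) in
noncomputable def critLHS (j : ι) : ℝ :=
  c * ξ j + vq q0 (ξ j) + vq q1 (ξ j) + ∑ k ∈ univ.erase j, (vq q (ξ j + ξ k) + vq q (ξ j - ξ k))

lemma critLHS_nonpos (hq : |q| < 1) (hq0 : |q0| < 1) (hq1 : |q1| < 1) (hc : 0 ≤ c) {j : ι}
    (hj : ξ j ≤ 0) : critLHS c q q0 q1 ξ j ≤ 0 := by
  have h0 := (vq_strictMono hq0).monotone hj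
  have h1 := (vq_strictMono hq1).monotone hj
  rw [vq_zero] at h0 h1
  have hsum : ∑ k ∈ univ.erase j, (vq q (ξ j + ξ k) + vq q (ξ j - ξ k)) ≤ 0 :=
    sum_nonpos fun k _ => vq_add_vq_nonpos hq (by linarith)
  have := mul_nonpos_of_nonneg_of_nonpos hc hj
  rw [critLHS]
  linarith

lemma le_critLHS (hq : |q| < 1) (hq0 : |q0| < 1) (hq1 : |q1| < 1) (hc : 0 ≤ c) {j : ι}
    (hj : π ≤ ξ j) : c * π + 2 * π * Fintype.card ι ≤ critLHS c q q0 q1 ξ j := by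
  have h0 := (vq_strictMono hq0).monotone hj
  have h1 := (vq_strictMono hq1).monotone hj
  rw [vq_pi hq0] at h0
  rw [vq_pi hq1] at h1
  have hsum : #(univ.erase j) • (2 * π) ≤
      ∑ k ∈ univ.erase j, (vq q (ξ j + ξ k) + vq q (ξ j - ξ k)) :=
    card_nsmul_le_sum _ _ _ fun k _ => two_pi_le_vq_add_vq hq (by linarith)
  have hcard : (#(univ.erase j) : ℝ) + 1 = Fintype.card ι := by
    exact_mod_cast card_erase_add_one (mem_univ j)
  rw [nsmul_eq_mul] at hsum
  have := mul_le_mul_of_nonneg_left hj hc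
  rw [critLHS, ← hcard]
  linarith

lemma critLHS_le_critLHS (hq : |q| < 1) (hq0 : |q0| < 1) (hq1 : |q1| < 1) (hc : 0 ≤ c)
    {j k : ι} (hjk : j ≠ k) (h : ξ j ≤ ξ k) :
    critLHS c q q0 q1 ξ j ≤ critLHS c q q0 q1 ξ k := by
  have hmono := (vq_strictMono hq).monotone
  have hsum : ∑ l ∈ univ.erase j, (vq q (ξ j + ξ l) + vq q (ξ j - ξ l)) ≤
      ∑ l ∈ univ.erase k, (vq q (ξ k + ξ l) + vq q (ξ k - ξ l)) :=
    sum_erase_le_sum_erase (mem_univ j) (mem_univ k) hjk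
      (add_le_add (hmono (by linarith)) (hmono (by linarith)))
      fun l _ _ _ => add_le_add (hmono (by linarith)) (hmono (by linarith))
  have := mul_le_mul_of_nonneg_left h hc
  have := (vq_strictMono hq0).monotone h
  have := (vq_strictMono hq1).monotone h
  rw [critLHS, critLHS]
  linarith

end CriticalEquation

theorem nodes_in_alcove_typeB_general (n m : ℕ)
    (q q0 q1 : ℝ) (hq : -1 < q) (hq' : q < 1) (hq0 : -1 < q0) (hq0' : q0 < 1)
    (hq1 : -1 < q1) (hq1' : q1 < 1)
    (lam : Fin n → ℤ)
    (hmono : ∀ j k : Fin n, j ≤ k → lam k ≤ lam j)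
    (hub : ∀ j : Fin n, lam j ≤ m) (hlb : ∀ j : Fin n, 0 ≤ lam j)
    (ξ : Fin n → ℝ)
    (hcrit : ∀ j : Fin n,
      2 * ((m : ℝ) + 1) * ξ j + vq q0 (ξ j) + vq q1 (ξ j) +
          ∑ k ∈ Finset.univ.erase j, (vq q (ξ j + ξ k) + vq q (ξ j - ξ k)) =
        2 * Real.pi * ((lam j : ℝ) + (n : ℝ) + 1 - ((j : ℕ) + 1))) :
    (∀ j : Fin n, 0 < ξ j ∧ ξ j < Real.pi) ∧
      ∀ j k : Fin n, j < k → ξ k < ξ j := by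
  have hqa : |q| < 1 := abs_lt.2 ⟨hq, hq'⟩
  have hq0a : |q0| < 1 := abs_lt.2 ⟨hq0, hq0'⟩
  have hq1a : |q1| < 1 := abs_lt.2 ⟨hq1, hq1'⟩
  have hc : (0 : ℝ) ≤ 2 * ((m : ℝ) + 1) := by positivity
  replace hcrit : ∀ j, critLHS (2 * ((m : ℝ) + 1)) q q0 q1 ξ j =
      2 * π * ((lam j : ℝ) + n + 1 - ((j : ℕ) + 1)) := hcrit
  refine ⟨fun j => ⟨?_, ?_⟩, fun j k hjk => ?_⟩
  · by_contra! h
    have hlhs := critLHS_nonpos hqa hq0a hq1a hc h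
    have : (0 : ℝ) ≤ lam j := by exact_mod_cast hlb j
    have : ((j : ℕ) : ℝ) + 1 ≤ n := by exact_mod_cast j.isLt
    rw [hcrit] at hlhs
    nlinarith [pi_pos]
  · by_contra! h
    have hlhs := le_critLHS hqa hq0a hq1a hc h
    have : (lam j : ℝ) ≤ m := by exact_mod_cast hub j
    rw [hcrit, Fintype.card_fin] at hlhs
    nlinarith [pi_pos]
  · by_contra! h
    have hlhs := critLHS_le_critLHS hqa hq0a hq1a hc hjk.ne h
    have : (lam k : ℝ) ≤ lam j := by exact_mod_cast hmono j k hjk.le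
    have : ((j : ℕ) : ℝ) + 1 ≤ (k : ℕ) := by exact_mod_cast hjk
    rw [hcrit, hcrit] at hlhs
    nlinarith [pi_pos]

theorem nodes_in_alcove_typeB (n m : ℕ) (hm : 0 < m)
    (q q0 q1 : ℝ) (hq : -1 < q) (hq' : q < 1) (hq0 : -1 < q0) (hq0' : q0 < 1)
    (hq1 : -1 < q1) (hq1' : q1 < 1)
    (lam : Fin n → ℤ)
    (hmono : ∀ j k : Fin n, j ≤ k → lam k ≤ lam j)
    (hub : ∀ j : Fin n, lam j ≤ m) (hlb : ∀ j : Fin n, 0 ≤ lam j)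
    (ξ : Fin n → ℝ)
    (hcrit : ∀ j : Fin n,
      2 * ((m : ℝ) + 1) * ξ j + vq q0 (ξ j) + vq q1 (ξ j) +
          ∑ k ∈ Finset.univ.erase j, (vq q (ξ j + ξ k) + vq q (ξ j - ξ k)) =
        2 * Real.pi * ((lam j : ℝ) + (n : ℝ) + 1 - ((j : ℕ) + 1))) :
    (∀ j : Fin n, 0 < ξ j ∧ ξ j < Real.pi) ∧
      ∀ j k : Fin n, j < k → ξ k < ξ j :=
  nodes_in_alcove_typeB_general n m q q0 q1 hq hq' hq0 hq0' hq1 hq1' lam hmono hub hlb ξ hcrit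
end

section
/- Let n ≥ 2, q ∈ (-1,1). Define C_a(ξ;q) = Π_{1≤j<k≤n} (1 - q e^{-i(ξ_j-ξ_k)})/(1 - e^{-i(ξ_j-ξ_k)}) on points ξ with e^{iξ_j} pairwise distinct, and the Hall-Littlewood polynomial P_μ(ξ;q) = Σ_{σ∈S_n} C_a(ξ_{σ(1)},…,ξ_{σ(n)};q) exp(i Σ_j ξ_{σ(j)} μ_j). If μ ∈ ℤⁿ (or more generally μ in the integral span of the fundamental weights) satisfies μ_j - μ_{j+1} = -1 for some j ∈ {1,…,n-1}, then P_μ(ξ;q) = q · P_{μ + e_j - e_{j+1}}(ξ;q). -/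
open Complex

noncomputable def Ca (n : ℕ) (q : ℝ) (ξ : Fin n → ℝ) : ℂ :=
  ∏ p ∈ Finset.univ.filter (fun p : Fin n × Fin n => p.1 < p.2),
    (1 - (q : ℂ) * Complex.exp (-Complex.I * ((ξ p.1 - ξ p.2 : ℝ) : ℂ))) /
      (1 - Complex.exp (-Complex.I * ((ξ p.1 - ξ p.2 : ℝ) : ℂ)))

noncomputable def HLa (n : ℕ) (q : ℝ) (μ : Fin n → ℤ) (ξ : Fin n → ℝ) : ℂ :=
  ∑ σ : Equiv.Perm (Fin n),
    Ca n q (fun j => ξ (σ j)) *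
      Complex.exp (Complex.I * ∑ j, ((ξ (σ j) : ℝ) : ℂ) * ((μ j : ℤ) : ℂ))

/-! Because `μ k = μ j + 1`, the shifted weight is `μ ∘ s` for the adjacent transposition
`s = (j k)`, so after reindexing `σ ↦ σ * s` both sides become sums over `σ` of `Ca (ξ ∘ σ)`,
resp. `q * Ca (ξ ∘ σ ∘ s)`, against the same phase. Pairing `σ` with `σ * s`, the terms cancel by
`C(ξ) + C(sξ) e^{i(ξ_j - ξ_k)} = q C(ξ) e^{i(ξ_j - ξ_k)} + q C(sξ)`: as `s` permutes the pairs
`a < b` other than `(j, k)`, only the `(j, k)` factor of `Ca` changes, and the identity reduces to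
one rational identity in `w = e^{i(ξ_j - ξ_k)}`. -/

section AdjacentTransposition

variable {α : Type*} [LinearOrder α] {j k : α}

theorem Equiv.swap_lt_swap_of_covBy (hjk : j ⋖ k) {a b : α} (hab : a < b) (hne : (a, b) ≠ (j, k)) :
    Equiv.swap j k a < Equiv.swap j k b := by
  have below : ∀ c, c < k → c ≤ j := fun _ => hjk.le_of_lt
  have above : ∀ c, j < c → k ≤ c := fun _ => hjk.ge_of_gt
  have := hjk.lt
  simp only [Equiv.swap_apply_def]
  split_ifs <;> grind

theorem Equiv.swap_mem_erase_filter_lt_of_covBy [Fintype α] (hjk : j ⋖ k) {p : α × α}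
    (hp : p ∈ (Finset.univ.filter fun p : α × α => p.1 < p.2).erase (j, k)) :
    (Equiv.swap j k p.1, Equiv.swap j k p.2) ∈
      (Finset.univ.filter fun p : α × α => p.1 < p.2).erase (j, k) := by
  obtain ⟨a, b⟩ := p
  simp only [Finset.mem_erase, Finset.mem_filter, Finset.mem_univ, true_and, ne_eq,
    Prod.mk.injEq, Equiv.swap_apply_eq_iff, Equiv.swap_apply_left, Equiv.swap_apply_right] at hp ⊢
  refine ⟨?_, Equiv.swap_lt_swap_of_covBy hjk hp.2 (by simpa using hp.1)⟩
  rintro ⟨rfl, rfl⟩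
  exact hp.2.not_gt hjk.lt

end AdjacentTransposition

theorem Fintype.sum_swap_mul {ι R : Type*} [Fintype ι] [DecidableEq ι] [CommRing R]
    (x μ : ι → R) {j k : ι} (hjk : j ≠ k) :
    ∑ l, x (Equiv.swap j k l) * μ l = ∑ l, x l * μ l + (x j - x k) * (μ k - μ j) := by
  rw [← sub_eq_iff_eq_add', ← Finset.sum_sub_distrib, Fintype.sum_eq_add j k hjk]
  · simp only [Equiv.swap_apply_left, Equiv.swap_apply_right]
    ring
  · rintro l ⟨hlj, hlk⟩
    rw [Equiv.swap_apply_of_ne_of_ne hlj hlk, sub_self]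

noncomputable def caFactor (q d : ℝ) : ℂ :=
  (1 - (q : ℂ) * Complex.exp (-Complex.I * (d : ℂ))) / (1 - Complex.exp (-Complex.I * (d : ℂ)))

theorem Ca_split_of_covBy {n : ℕ} (q : ℝ) (η : Fin n → ℝ) {j k : Fin n} (hjk : j ⋖ k) :
    ∃ P : ℂ, Ca n q η = P * caFactor q (η j - η k) ∧
      Ca n q (fun l => η (Equiv.swap j k l)) = P * caFactor q (η k - η j) := by
  have hmem : (j, k) ∈ Finset.univ.filter (fun p : Fin n × Fin n => p.1 < p.2) := by
    simpa using hjk.lt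
  refine ⟨_, (Finset.prod_erase_mul _ _ hmem).symm, ?_⟩
  rw [Ca, ← Finset.prod_erase_mul _ _ hmem]
  simp only [Equiv.swap_apply_left, Equiv.swap_apply_right]
  congr 1
  refine Finset.prod_nbij' (fun p => (Equiv.swap j k p.1, Equiv.swap j k p.2))
    (fun p => (Equiv.swap j k p.1, Equiv.swap j k p.2))
    (fun p hp => Equiv.swap_mem_erase_filter_lt_of_covBy hjk hp)
    (fun p hp => Equiv.swap_mem_erase_filter_lt_of_covBy hjk hp)
    (by simp) (by simp) (fun p _ => by simp)

theorem straightening_factor_identity (q w : ℂ) (hw0 : w ≠ 0) (hw1 : w ≠ 1) :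
    (1 - q * w⁻¹) / (1 - w⁻¹) + (1 - q * w) / (1 - w) * w =
      q * ((1 - q * w⁻¹) / (1 - w⁻¹)) * w + q * ((1 - q * w) / (1 - w)) := by
  field_simp
  ring

theorem Ca_add_Ca_swap_mul_exp {n : ℕ} (q : ℝ) (η : Fin n → ℝ) {j k : Fin n} (hjk : j ⋖ k)
    (hη : Complex.exp (Complex.I * η j) ≠ Complex.exp (Complex.I * η k)) :
    Ca n q η + Ca n q (fun l => η (Equiv.swap j k l)) * Complex.exp (Complex.I * (η j - η k)) =
      q * Ca n q η * Complex.exp (Complex.I * (η j - η k)) +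
        q * Ca n q (fun l => η (Equiv.swap j k l)) := by
  obtain ⟨P, hCa, hCa_swap⟩ := Ca_split_of_covBy q η hjk
  set w := Complex.exp (Complex.I * (η j - η k))
  have hw : Complex.exp (Complex.I * η j) = w * Complex.exp (Complex.I * η k) := by
    rw [← Complex.exp_add]
    ring_nf
  have hw1 : w ≠ 1 := fun h => hη (by rw [hw, h, one_mul])
  have hjk_factor : caFactor q (η j - η k) = (1 - q * w⁻¹) / (1 - w⁻¹) := by
    simp only [caFactor, w, ← Complex.exp_neg]
    push_cast
    ring_nf
  have hkj_factor : caFactor q (η k - η j) = (1 - q * w) / (1 - w) := by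
    simp only [caFactor, w]
    push_cast
    ring_nf
  rw [hCa, hCa_swap, hjk_factor, hkj_factor]
  linear_combination P * straightening_factor_identity q w (Complex.exp_ne_zero _) hw1

theorem shift_eq_comp_swap_of_sub_eq_neg_one {ι : Type*} [DecidableEq ι] {μ : ι → ℤ} {j k : ι}
    (hμ : μ j - μ k = -1) :
    (fun l => if l = j then μ j + 1 else if l = k then μ k - 1 else μ l) =
      fun l => μ (Equiv.swap j k l) := by
  funext l
  simp only [Equiv.swap_apply_def]
  split_ifs <;> subst_vars <;> omega

theorem HLa_comp_perm {n : ℕ} (q : ℝ) (μ : Fin n → ℤ) (ξ : Fin n → ℝ) (τ : Equiv.Perm (Fin n)) :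
    HLa n q (fun l => μ (τ l)) ξ = ∑ σ : Equiv.Perm (Fin n),
      Ca n q (fun l => ξ (σ (τ l))) *
        Complex.exp (Complex.I * ∑ l, ((ξ (σ l) : ℝ) : ℂ) * ((μ l : ℤ) : ℂ)) := by
  refine (Fintype.sum_equiv (Equiv.mulRight τ) _ _ fun σ => ?_).symm
  simp only [Equiv.coe_mulRight, Equiv.Perm.mul_apply]
  congr 3
  exact (Equiv.sum_comp τ fun l => ((ξ (σ l) : ℝ) : ℂ) * ((μ l : ℤ) : ℂ)).symm

theorem HL_straightening_typeA_general (n : ℕ) (q : ℝ)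
    (ξ : Fin n → ℝ)
    (hdist : ∀ j k : Fin n, j ≠ k →
      Complex.exp (Complex.I * ((ξ j : ℝ) : ℂ)) ≠ Complex.exp (Complex.I * ((ξ k : ℝ) : ℂ)))
    (μ : Fin n → ℤ) (j k : Fin n) (hjk : (k : ℕ) = (j : ℕ) + 1)
    (hμ : μ j - μ k = -1) :
    HLa n q μ ξ =
      (q : ℂ) * HLa n q (fun l => if l = j then μ j + 1 else if l = k then μ k - 1 else μ l) ξ := by
  have hcov : j ⋖ k := ⟨Fin.lt_def.2 (by omega), fun c hjc hck => by rw [Fin.lt_def] at *; omega⟩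
  have hμ_cast : ((μ k : ℤ) : ℂ) - μ j = 1 := by exact_mod_cast (by omega : μ k - μ j = 1)
  rw [shift_eq_comp_swap_of_sub_eq_neg_one hμ, HLa_comp_perm, HLa, Finset.mul_sum, ← sub_eq_zero,
    ← Finset.sum_sub_distrib]
  refine Finset.sum_ninvolution (· * Equiv.swap j k) (fun σ => ?_) (fun σ _ => ?_)
    (fun _ => Finset.mem_univ _) (fun σ => by simp [mul_assoc])
  · set E := Complex.exp (Complex.I * ∑ l, ((ξ (σ l) : ℝ) : ℂ) * ((μ l : ℤ) : ℂ))
    have hE_swap : Complex.exp (Complex.I * ∑ l, ((ξ (σ (Equiv.swap j k l)) : ℝ) : ℂ) * μ l) =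
        E * Complex.exp (Complex.I * (ξ (σ j) - ξ (σ k))) := by
      rw [Fintype.sum_swap_mul (fun l => ((ξ (σ l) : ℝ) : ℂ)) _ hcov.ne, hμ_cast, ← Complex.exp_add]
      ring_nf
    have key := Ca_add_Ca_swap_mul_exp q (fun l => ξ (σ l)) hcov
      (hdist _ _ (σ.injective.ne hcov.ne))
    simp only [Equiv.Perm.mul_apply, Equiv.swap_apply_self, hE_swap]
    linear_combination E * key
  · simpa using hcov.ne

theorem HL_straightening_typeA (n : ℕ) (q : ℝ) (hq : -1 < q) (hq' : q < 1)
    (ξ : Fin n → ℝ)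
    (hdist : ∀ j k : Fin n, j ≠ k →
      Complex.exp (Complex.I * ((ξ j : ℝ) : ℂ)) ≠ Complex.exp (Complex.I * ((ξ k : ℝ) : ℂ)))
    (μ : Fin n → ℤ) (j k : Fin n) (hjk : (k : ℕ) = (j : ℕ) + 1)
    (hμ : μ j - μ k = -1) :
    HLa n q μ ξ =
      (q : ℂ) * HLa n q (fun l => if l = j then μ j + 1 else if l = k then μ k - 1 else μ l) ξ :=
  HL_straightening_typeA_general n q ξ hdist μ j k hjk hμ
end
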